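/- Fix a real u ≠ 0. For real w with ξ²(w−1)w > (κ−ρξw)², define the Heston moment-explosion time T(w) := (2/√(ξ²(w−1)w − (κ−ρξw)²))·[π·1_{{ρξw−κ<0}} + arctan(√(ξ²(w−1)w − (κ−ρξw)²)/(ρξw−κ))]. Then for all sufficiently small x > 0 the condition ξ²((u/x)−1)(u/x) > (κ−ρξ(u/x))² holds, and as x → 0+, T(u/x) = (x/(ξ|u|))·(c(ρ,u) + O(x)), where c(ρ,u) := π if ρ = 0, and c(ρ,u) := (2/ρ̄)·(π·1_{{ρu≤0}} + sgn(u)·arctan(ρ̄/ρ)) if ρ ≠ 0. -/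

import Mathlib

open Filter Topology Asymptotics MeasureTheory

set_option linter.unusedVariables false

noncomputable section

def sgn' (x : ℝ) : ℝ := if 0 ≤ x then 1 else -1

/-- the Heston moment-explosion time. -/
def hestTexp (κ ρ ξ w : ℝ) : ℝ :=
  (2 / Real.sqrt (ξ ^ 2 * (w - 1) * w - (κ - ρ * ξ * w) ^ 2)) *
    ((if ρ * ξ * w - κ < 0 then Real.pi else 0) +
      Real.arctan (Real.sqrt (ξ ^ 2 * (w - 1) * w - (κ - ρ * ξ * w) ^ 2) / (ρ * ξ * w - κ)))

def cRho (ρ u : ℝ) : ℝ :=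
  if ρ = 0 then Real.pi
  else (2 / Real.sqrt (1 - ρ ^ 2)) *
    ((if ρ * u ≤ 0 then Real.pi else 0) + sgn' u * Real.arctan (Real.sqrt (1 - ρ ^ 2) / ρ))

open Real

/-! Substituting `w = u / x`, the discriminant `ξ²(w-1)w - (κ-ρξw)²` becomes `P(x) / x²` with
`P` a quadratic polynomial, `P(0) = ξ²(1-ρ²)u² > 0`. Away from the zero of the denominator,
`π·1{b<0} + arctan(a/b) = π/2 - arctan(b/a)` for `a > 0`, which rewrites `T(u/x)` as `x·Φ(x)`
with `Φ(x) = 2/√P(x) · (π/2 - arctan((ρξu-κx)/√P(x)))` differentiable at `0`. Hence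
`T(u/x) = x·Φ(0) + O(x²)`, and `Φ(0) = c(ρ,u)/(ξ|u|)`. -/

namespace Real

theorem ite_add_arctan_div_eq {a b : ℝ} (ha : 0 < a) (hb : b ≠ 0) :
    (if b < 0 then π else 0) + arctan (a / b) = π / 2 - arctan (b / a) := by
  rw [← inv_div b a]
  rcases hb.lt_or_gt with hneg | hpos
  · rw [if_pos hneg, arctan_inv_of_neg (div_neg_of_neg_of_pos hneg ha)]
    ring
  · rw [if_neg hpos.not_gt, arctan_inv_of_pos (div_pos hpos ha), zero_add]

end Real

theorem DifferentiableAt.isBigO_smul_sub_sq {𝕜 E : Type*} [NontriviallyNormedField 𝕜]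
    [NormedAddCommGroup E] [NormedSpace 𝕜 E] {f : 𝕜 → E} (hf : DifferentiableAt 𝕜 f 0) :
    (fun x => x • (f x - f 0)) =O[𝓝 0] fun x => x ^ 2 := by
  have h := hf.isBigO_sub
  simp only [sub_zero] at h
  simpa only [pow_two, smul_eq_mul] using (isBigO_refl (fun x : 𝕜 => x) _).smul h

theorem eventually_sub_mul_ne_zero {c k : ℝ} (hk : k ≠ 0) :
    ∀ᶠ x in 𝓝[≠] (0 : ℝ), c - k * x ≠ 0 := by
  rcases eq_or_ne c 0 with rfl | hc
  · filter_upwards [self_mem_nhdsWithin] with x hx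
    simpa [hk] using hx
  · have h : Tendsto (fun x : ℝ => c - k * x) (𝓝 0) (𝓝 c) :=
      (show Continuous (fun x : ℝ => c - k * x) by fun_prop).tendsto' 0 c (by simp)
    exact (h.eventually_ne hc).filter_mono nhdsWithin_le_nhds

theorem hestTexp_eq {κ ρ ξ w : ℝ} (hD : 0 < ξ ^ 2 * (w - 1) * w - (κ - ρ * ξ * w) ^ 2)
    (hb : ρ * ξ * w - κ ≠ 0) :
    hestTexp κ ρ ξ w = 2 / √(ξ ^ 2 * (w - 1) * w - (κ - ρ * ξ * w) ^ 2) *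
      (π / 2 - arctan ((ρ * ξ * w - κ) / √(ξ ^ 2 * (w - 1) * w - (κ - ρ * ξ * w) ^ 2))) := by
  rw [hestTexp, ite_add_arctan_div_eq (sqrt_pos.2 hD) hb]

section Rescaled

variable (κ ξ ρ u : ℝ)

def hestonDiscNum (x : ℝ) : ℝ :=
  ξ ^ 2 * (1 - ρ ^ 2) * u ^ 2 + (2 * κ * ρ * ξ - ξ ^ 2) * u * x - κ ^ 2 * x ^ 2

def hestonRescaledTexp (x : ℝ) : ℝ :=
  2 / √(hestonDiscNum κ ξ ρ u x) *
    (π / 2 - arctan ((ρ * ξ * u - κ * x) / √(hestonDiscNum κ ξ ρ u x)))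

theorem hestonDisc_div_eq {x : ℝ} (hx : x ≠ 0) :
    ξ ^ 2 * (u / x - 1) * (u / x) - (κ - ρ * ξ * (u / x)) ^ 2 = hestonDiscNum κ ξ ρ u x / x ^ 2 := by
  rw [hestonDiscNum]
  field_simp
  ring

variable {κ ξ ρ u}

theorem hestonDiscNum_zero :
    hestonDiscNum κ ξ ρ u 0 = (ξ * |u|) ^ 2 * (1 - ρ ^ 2) := by
  rw [hestonDiscNum, mul_pow, sq_abs]
  ring

theorem hestonDiscNum_zero_pos (hξ : 0 < ξ) (hu : u ≠ 0) (hρ : 0 < 1 - ρ ^ 2) :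
    0 < hestonDiscNum κ ξ ρ u 0 := by
  rw [hestonDiscNum_zero]
  positivity

theorem hestTexp_div_eq_mul {x : ℝ} (hx : 0 < x) (hP : 0 < hestonDiscNum κ ξ ρ u x)
    (hb : ρ * ξ * u - κ * x ≠ 0) :
    hestTexp κ ρ ξ (u / x) = x * hestonRescaledTexp κ ξ ρ u x := by
  have hsqrt : √(ξ ^ 2 * (u / x - 1) * (u / x) - (κ - ρ * ξ * (u / x)) ^ 2)
      = √(hestonDiscNum κ ξ ρ u x) / x := by
    rw [hestonDisc_div_eq κ ξ ρ u hx.ne', sqrt_div hP.le, sqrt_sq hx.le]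
  have hden : ρ * ξ * (u / x) - κ = (ρ * ξ * u - κ * x) / x := by
    field_simp
  rw [hestTexp_eq (hestonDisc_div_eq κ ξ ρ u hx.ne' ▸ by positivity)
      (hden ▸ div_ne_zero hb hx.ne'), hsqrt, hden, div_div_div_cancel_right₀ hx.ne',
    hestonRescaledTexp, div_div_eq_mul_div]
  ring

theorem cRho_eq (hu : u ≠ 0) (hρ : 0 < 1 - ρ ^ 2) :
    cRho ρ u = 2 / √(1 - ρ ^ 2) * (π / 2 - arctan (ρ * u / |u| / √(1 - ρ ^ 2))) := by
  rcases eq_or_ne ρ 0 with rfl | h0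
  · simp only [cRho, if_pos, zero_mul, zero_div, arctan_zero]
    norm_num
    ring
  have hr := sqrt_pos.2 hρ
  rw [cRho, if_neg h0]
  congr 1
  rcases hu.lt_or_gt with hneg | hpos
  · have hb : ρ * u / |u| = -ρ := by
      rw [abs_of_neg hneg]
      field_simp
    have hcond : ρ * u ≤ 0 ↔ -ρ < 0 := by
      rcases h0.lt_or_gt with h | h <;> constructor <;> intro <;> nlinarith
    rw [hb, ← ite_add_arctan_div_eq hr (neg_ne_zero.2 h0), if_congr hcond rfl rfl, sgn',
      if_neg hneg.not_ge, div_neg, arctan_neg]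
    ring
  · have hb : ρ * u / |u| = ρ := by
      rw [abs_of_pos hpos]
      field_simp
    have hcond : ρ * u ≤ 0 ↔ ρ < 0 := by
      rcases h0.lt_or_gt with h | h <;> constructor <;> intro <;> nlinarith
    rw [hb, ← ite_add_arctan_div_eq hr h0, if_congr hcond rfl rfl, sgn', if_pos hpos.le, one_mul]

theorem hestonRescaledTexp_zero (hξ : 0 < ξ) (hu : u ≠ 0) (hρ : 0 < 1 - ρ ^ 2) :
    hestonRescaledTexp κ ξ ρ u 0 = cRho ρ u / (ξ * |u|) := by
  have hr := sqrt_pos.2 hρ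
  rw [cRho_eq hu hρ, hestonRescaledTexp, hestonDiscNum_zero, sqrt_mul (sq_nonneg _),
    sqrt_sq (by positivity), mul_zero, sub_zero, mul_comm ρ ξ, mul_assoc ξ ρ u, mul_assoc ξ,
    mul_div_mul_left _ _ hξ.ne', div_div]
  field_simp

theorem differentiableAt_hestonRescaledTexp (hξ : 0 < ξ) (hu : u ≠ 0) (hρ : 0 < 1 - ρ ^ 2) :
    DifferentiableAt ℝ (hestonRescaledTexp κ ξ ρ u) 0 := by
  have hP := hestonDiscNum_zero_pos (κ := κ) hξ hu hρ
  have hs : √(hestonDiscNum κ ξ ρ u 0) ≠ 0 := (sqrt_pos.2 hP).ne'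
  have hsqrt : DifferentiableAt ℝ (fun x => √(hestonDiscNum κ ξ ρ u x)) 0 :=
    DifferentiableAt.sqrt (by unfold hestonDiscNum; fun_prop) hP.ne'
  exact ((differentiableAt_const 2).div hsqrt hs).mul
    ((differentiableAt_const _).sub ((by fun_prop : DifferentiableAt ℝ
      (fun x => ρ * ξ * u - κ * x) 0).div hsqrt hs).arctan)

end Rescaled

theorem stmt8 (κ ξ ρ : ℝ) (hκ : 0 < κ) (hξ : 0 < ξ) (hρ : ρ ∈ Set.Ioo (-1 : ℝ) 1)
    (u : ℝ) (hu : u ≠ 0) :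
    (∀ᶠ x in 𝓝[>] (0 : ℝ),
      ξ ^ 2 * (u / x - 1) * (u / x) > (κ - ρ * ξ * (u / x)) ^ 2) ∧
    ((fun x : ℝ => hestTexp κ ρ ξ (u / x) - x / (ξ * |u|) * cRho ρ u)
      =O[𝓝[>] (0 : ℝ)] fun x : ℝ => x ^ 2) := by
  obtain ⟨hρl, hρr⟩ := hρ
  have hρ2 : 0 < 1 - ρ ^ 2 := by nlinarith
  have hP : ∀ᶠ x in 𝓝[>] 0, 0 < hestonDiscNum κ ξ ρ u x :=
    ((show Continuous (hestonDiscNum κ ξ ρ u) by unfold hestonDiscNum; fun_prop).continuousAt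
      |>.eventually (eventually_gt_nhds (hestonDiscNum_zero_pos hξ hu hρ2))).filter_mono
      nhdsWithin_le_nhds
  have hb := (eventually_sub_mul_ne_zero (c := ρ * ξ * u) hκ.ne').filter_mono (nhdsGT_le_nhdsNE 0)
  refine ⟨?_, ?_⟩
  · filter_upwards [self_mem_nhdsWithin, hP] with x (hx : 0 < x) hPx
    rw [gt_iff_lt, ← sub_pos, hestonDisc_div_eq κ ξ ρ u hx.ne']
    positivity
  · have hT : (fun x => hestTexp κ ρ ξ (u / x) - x / (ξ * |u|) * cRho ρ u) =ᶠ[𝓝[>] 0]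
        fun x => x • (hestonRescaledTexp κ ξ ρ u x - hestonRescaledTexp κ ξ ρ u 0) := by
      filter_upwards [self_mem_nhdsWithin, hP, hb] with x hx hPx hbx
      rw [hestTexp_div_eq_mul hx hPx hbx, hestonRescaledTexp_zero hξ hu hρ2, smul_eq_mul]
      ring
    exact hT.trans_isBigO <| (differentiableAt_hestonRescaledTexp hξ hu hρ2
      |>.isBigO_smul_sub_sq).mono nhdsWithin_le_nhds

end
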